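/- arXiv:2106.14831 — 5 statements merged into one kernel-verified Lean document; each statement's English description precedes it below -/
import Mathlib

section
/- The Minkowski sum of two hybrid zonotopes Z = ⟨G_z^c, G_z^b, c_z, A_z^c, A_z^b, b_z⟩ and W = ⟨G_w^c, G_w^b, c_w, A_w^c, A_w^b, b_w⟩ in ℝ^n is the hybrid zonotope ⟨[G_z^c G_w^c], [G_z^b G_w^b], c_z + c_w, diag(A_z^c, A_w^c), diag(A_z^b, A_w^b), (b_z; b_w)⟩, where the generator matrices are concatenated horizontally and the constraint matrices are block-diagonal. -/
/-- Hybrid zonotope ⟨Gc, Gb, c, Ac, Ab, b⟩. -/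
def hybridZonotope {n ng nb nc : Type*} [Fintype ng] [Fintype nb]
    (Gc : Matrix n ng ℝ) (Gb : Matrix n nb ℝ) (c : n → ℝ)
    (Ac : Matrix nc ng ℝ) (Ab : Matrix nc nb ℝ) (b : nc → ℝ) : Set (n → ℝ) :=
  {z | ∃ ξc : ng → ℝ, ∃ ξb : nb → ℝ, (∀ i, |ξc i| ≤ 1) ∧ (∀ i, ξb i = 1 ∨ ξb i = -1) ∧
    Ac.mulVec ξc + Ab.mulVec ξb = b ∧ z = Gc.mulVec ξc + Gb.mulVec ξb + c}

/-!
Factors of the concatenated zonotope are pairs of factors of `Z` (the `inl` coordinates) and of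
`W` (the `inr` coordinates): concatenating generators adds the two points, and block-diagonal
constraints decouple into those of `Z` and those of `W`.
-/

open Matrix
open scoped Pointwise

theorem fromBlocks_diag_mulVec_add_eq_sumElim_iff {m m' p p' q q' : Type*}
    [Fintype p] [Fintype p'] [Fintype q] [Fintype q']
    (A : Matrix m p ℝ) (A' : Matrix m' p' ℝ) (B : Matrix m q ℝ) (B' : Matrix m' q' ℝ)
    (ξ : p ⊕ p' → ℝ) (η : q ⊕ q' → ℝ) (b : m → ℝ) (b' : m' → ℝ) :
    fromBlocks A 0 0 A' *ᵥ ξ + fromBlocks B 0 0 B' *ᵥ η = Sum.elim b b' ↔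
      A *ᵥ (ξ ∘ Sum.inl) + B *ᵥ (η ∘ Sum.inl) = b ∧
        A' *ᵥ (ξ ∘ Sum.inr) + B' *ᵥ (η ∘ Sum.inr) = b' := by
  simp only [fromBlocks_mulVec, zero_mulVec, add_zero, zero_add, ← Sum.elim_add_add,
    Sum.elim_eq_iff]

theorem hybridZonotope_add {n ngz ngw nbz nbw ncz ncw : Type*}
    [Fintype ngz] [Fintype ngw] [Fintype nbz] [Fintype nbw]
    (Gzc : Matrix n ngz ℝ) (Gzb : Matrix n nbz ℝ) (cz : n → ℝ)
    (Azc : Matrix ncz ngz ℝ) (Azb : Matrix ncz nbz ℝ) (bz : ncz → ℝ)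
    (Gwc : Matrix n ngw ℝ) (Gwb : Matrix n nbw ℝ) (cw : n → ℝ)
    (Awc : Matrix ncw ngw ℝ) (Awb : Matrix ncw nbw ℝ) (bw : ncw → ℝ) :
    hybridZonotope Gzc Gzb cz Azc Azb bz + hybridZonotope Gwc Gwb cw Awc Awb bw =
      hybridZonotope (fromCols Gzc Gwc) (fromCols Gzb Gwb) (cz + cw)
        (fromBlocks Azc 0 0 Awc) (fromBlocks Azb 0 0 Awb) (Sum.elim bz bw) := by
  ext x
  simp only [Set.mem_add, hybridZonotope, Set.mem_ofPred_eq]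
  constructor
  · rintro ⟨_, ⟨ξz, ηz, hξz, hηz, hz, rfl⟩, _, ⟨ξw, ηw, hξw, hηw, hw, rfl⟩, rfl⟩
    refine ⟨Sum.elim ξz ξw, Sum.elim ηz ηw, Sum.forall.2 ⟨hξz, hξw⟩, Sum.forall.2 ⟨hηz, hηw⟩,
      (fromBlocks_diag_mulVec_add_eq_sumElim_iff ..).2 ⟨hz, hw⟩, ?_⟩
    simp only [fromCols_mulVec_sumElim]
    abel
  · rintro ⟨ξ, η, hξ, hη, h, rfl⟩
    obtain ⟨hz, hw⟩ := (fromBlocks_diag_mulVec_add_eq_sumElim_iff ..).1 h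
    refine ⟨_, ⟨ξ ∘ Sum.inl, η ∘ Sum.inl, fun _ ↦ hξ _, fun _ ↦ hη _, hz, rfl⟩,
      _, ⟨ξ ∘ Sum.inr, η ∘ Sum.inr, fun _ ↦ hξ _, fun _ ↦ hη _, hw, rfl⟩, ?_⟩
    simp only [fromCols_mulVec]
    abel

theorem hybridZonotope_minkowskiSum
    {n ngz ngw nbz nbw ncz ncw : ℕ}
    (Gzc : Matrix (Fin n) (Fin ngz) ℝ) (Gzb : Matrix (Fin n) (Fin nbz) ℝ) (cz : Fin n → ℝ)
    (Azc : Matrix (Fin ncz) (Fin ngz) ℝ) (Azb : Matrix (Fin ncz) (Fin nbz) ℝ) (bz : Fin ncz → ℝ)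
    (Gwc : Matrix (Fin n) (Fin ngw) ℝ) (Gwb : Matrix (Fin n) (Fin nbw) ℝ) (cw : Fin n → ℝ)
    (Awc : Matrix (Fin ncw) (Fin ngw) ℝ) (Awb : Matrix (Fin ncw) (Fin nbw) ℝ) (bw : Fin ncw → ℝ) :
    {x | ∃ z ∈ hybridZonotope Gzc Gzb cz Azc Azb bz,
         ∃ w ∈ hybridZonotope Gwc Gwb cw Awc Awb bw, x = z + w} =
      hybridZonotope (Matrix.fromCols Gzc Gwc) (Matrix.fromCols Gzb Gwb) (cz + cw)
        (Matrix.fromBlocks Azc 0 0 Awc) (Matrix.fromBlocks Azb 0 0 Awb)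
        (Sum.elim bz bw) := by
  rw [← hybridZonotope_add]
  ext x
  simp only [Set.mem_ofPred_eq, Set.mem_add, eq_comm]
end

section
/- The generalized intersection of hybrid zonotopes is a hybrid zonotope: for Z = ⟨G_z^c, G_z^b, c_z, A_z^c, A_z^b, b_z⟩ ⊂ ℝ^n, Y = ⟨G_y^c, G_y^b, c_y, A_y^c, A_y^b, b_y⟩ ⊂ ℝ^m, and R ∈ ℝ^{m×n}, the set Z ∩_R Y = {z ∈ Z : Rz ∈ Y} equals the hybrid zonotope ⟨[G_z^c 0], [G_z^b 0], c_z, A, B, d⟩ where A = [[A_z^c, 0]; [0, A_y^c]; [RG_z^c, −G_y^c]], B = [[A_z^b, 0]; [0, A_y^b]; [RG_z^b, −G_y^b]], and d = (b_z; b_y; c_y − R c_z). -/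
open Matrix

theorem Sum.exists_sumElim {α β γ : Type*} {p : (α ⊕ β → γ) → Prop} :
    (∃ f, p f) ↔ ∃ u v, p (Sum.elim u v) :=
  ⟨fun ⟨f, hf⟩ => ⟨f ∘ Sum.inl, f ∘ Sum.inr, by rwa [Sum.elim_comp_inl_inr]⟩,
    fun ⟨_, _, h⟩ => ⟨_, h⟩⟩

theorem Matrix.fromCols_zero_mulVec_sumElim {K m n₁ n₂ : Type*} [Semiring K]
    [Fintype n₁] [Fintype n₂] (A : Matrix m n₁ K) (u : n₁ → K) (v : n₂ → K) :
    fromCols A 0 *ᵥ Sum.elim u v = A *ᵥ u := by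
  rw [fromCols_mulVec_sumElim, zero_mulVec, add_zero]

theorem generalizedIntersection_constraints_iff {K m n n₁ n₂ p₁ p₂ q₁ q₂ : Type*} [CommRing K]
    [Fintype n] [Fintype n₁] [Fintype n₂] [Fintype p₁] [Fintype p₂]
    (R : Matrix m n K) (Gzc : Matrix n n₁ K) (Gzb : Matrix n p₁ K) (cz : n → K)
    (Azc : Matrix q₁ n₁ K) (Azb : Matrix q₁ p₁ K) (bz : q₁ → K)
    (Gyc : Matrix m n₂ K) (Gyb : Matrix m p₂ K) (cy : m → K)
    (Ayc : Matrix q₂ n₂ K) (Ayb : Matrix q₂ p₂ K) (by' : q₂ → K)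
    (ξc : n₁ → K) (ηc : n₂ → K) (ξb : p₁ → K) (ηb : p₂ → K) :
    fromRows (fromBlocks Azc 0 0 Ayc) (fromCols (R * Gzc) (-Gyc)) *ᵥ Sum.elim ξc ηc +
        fromRows (fromBlocks Azb 0 0 Ayb) (fromCols (R * Gzb) (-Gyb)) *ᵥ Sum.elim ξb ηb =
        Sum.elim (Sum.elim bz by') (cy - R *ᵥ cz) ↔
      Azc *ᵥ ξc + Azb *ᵥ ξb = bz ∧ Ayc *ᵥ ηc + Ayb *ᵥ ηb = by' ∧
        R *ᵥ (Gzc *ᵥ ξc + Gzb *ᵥ ξb + cz) = Gyc *ᵥ ηc + Gyb *ᵥ ηb + cy := by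
  simp only [fromRows_mulVec, fromBlocks_mulVec, fromCols_mulVec_sumElim, Sum.elim_comp_inl,
    Sum.elim_comp_inr, zero_mulVec, add_zero, zero_add, ← Sum.elim_add_add, Sum.elim_eq_iff,
    neg_mulVec, mulVec_add, mulVec_mulVec, and_assoc]
  refine and_congr_right' (and_congr_right' ⟨fun h => ?_, fun h => ?_⟩) <;> linear_combination h

theorem hybridZonotope_generalizedIntersection
    {m n ngz ngy nbz nby ncz ncy : ℕ} (R : Matrix (Fin m) (Fin n) ℝ)
    (Gzc : Matrix (Fin n) (Fin ngz) ℝ) (Gzb : Matrix (Fin n) (Fin nbz) ℝ) (cz : Fin n → ℝ)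
    (Azc : Matrix (Fin ncz) (Fin ngz) ℝ) (Azb : Matrix (Fin ncz) (Fin nbz) ℝ) (bz : Fin ncz → ℝ)
    (Gyc : Matrix (Fin m) (Fin ngy) ℝ) (Gyb : Matrix (Fin m) (Fin nby) ℝ) (cy : Fin m → ℝ)
    (Ayc : Matrix (Fin ncy) (Fin ngy) ℝ) (Ayb : Matrix (Fin ncy) (Fin nby) ℝ) (by' : Fin ncy → ℝ) :
    {z ∈ hybridZonotope Gzc Gzb cz Azc Azb bz |
        R.mulVec z ∈ hybridZonotope Gyc Gyb cy Ayc Ayb by'} =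
      hybridZonotope
        (Matrix.fromCols Gzc (0 : Matrix (Fin n) (Fin ngy) ℝ))
        (Matrix.fromCols Gzb (0 : Matrix (Fin n) (Fin nby) ℝ))
        cz
        (Matrix.fromRows (Matrix.fromBlocks Azc 0 0 Ayc)
          (Matrix.fromCols (R * Gzc) (-Gyc)))
        (Matrix.fromRows (Matrix.fromBlocks Azb 0 0 Ayb)
          (Matrix.fromCols (R * Gzb) (-Gyb)))
        (Sum.elim (Sum.elim bz by') (cy - R.mulVec cz)) := by
  ext z
  simp only [hybridZonotope, Set.mem_ofPred_eq, Sum.exists_sumElim, Sum.forall, Sum.elim_inl,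
    Sum.elim_inr, fromCols_zero_mulVec_sumElim, generalizedIntersection_constraints_iff]
  constructor
  · rintro ⟨⟨ξc, ξb, hξc, hξb, hz, rfl⟩, ηc, ηb, hηc, hηb, hy, hRz⟩
    exact ⟨ξc, ηc, ξb, ηb, ⟨hξc, hηc⟩, ⟨hξb, hηb⟩, ⟨hz, hy, hRz⟩, rfl⟩
  · rintro ⟨ξc, ηc, ξb, ηb, ⟨hξc, hηc⟩, ⟨hξb, hηb⟩, ⟨hz, hy, hRz⟩, rfl⟩
    exact ⟨⟨ξc, ξb, hξc, hξb, hz, rfl⟩, ηc, ηb, hηc, hηb, hy, hRz⟩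
end

section
/- The one-step forward reachable set of an MLD system is a hybrid zonotope computed by set operations: given sets R_k ⊂ ℝ^n (states), U (inputs), W (auxiliary variables), dynamics x₊ = Ax + B_u u + B_w w + B_aff subject to E_x x + E_u u + E_w w ≤ E_aff, define V = [B_u; E_u]·U ⊕ [B_w; E_w]·W ⊕ {(B_aff; 0)} and H = {h ∈ ℝ^{n_e} : h ≤ E_aff}. Then the set {Ax + B_u u + B_w w + B_aff : x ∈ R_k, u ∈ U, w ∈ W, E_x x + E_u u + E_w w ≤ E_aff} equals [I_n 0]·(([A; E_x]·R_k ⊕ V) ∩_{[0 I_{n_e}]} H). -/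
theorem Sum.elim_add_elim_add_elim_add_elim_zero {ι κ M : Type*} [AddMonoid M]
    (a₁ a₂ a₃ a₄ : ι → M) (b₁ b₂ b₃ : κ → M) :
    Sum.elim a₁ b₁ + (Sum.elim a₂ b₂ + Sum.elim a₃ b₃ + Sum.elim a₄ 0) =
      Sum.elim (a₁ + a₂ + a₃ + a₄) (b₁ + b₂ + b₃) := by
  ext (i | j) <;>
    simp only [Pi.add_apply, Sum.elim_inl, Sum.elim_inr, Pi.zero_apply, add_zero, add_assoc]

section

variable {n nu nw ne : ℕ}
    (A : Matrix (Fin n) (Fin n) ℝ) (Bu : Matrix (Fin n) (Fin nu) ℝ)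
    (Bw : Matrix (Fin n) (Fin nw) ℝ) (Baff : Fin n → ℝ)
    (Ex : Matrix (Fin ne) (Fin n) ℝ) (Eu : Matrix (Fin ne) (Fin nu) ℝ)
    (Ew : Matrix (Fin ne) (Fin nw) ℝ)
    (Rk : Set (Fin n → ℝ)) (U : Set (Fin nu → ℝ)) (W : Set (Fin nw → ℝ))

theorem exists_stacked_add_mem_iff (y : Fin n ⊕ Fin ne → ℝ) :
    (∃ x ∈ Rk, ∃ v ∈ {v | ∃ u ∈ U, ∃ w ∈ W,
        v = Sum.elim (Bu.mulVec u) (Eu.mulVec u)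
          + Sum.elim (Bw.mulVec w) (Ew.mulVec w)
          + Sum.elim Baff 0}, y = Sum.elim (A.mulVec x) (Ex.mulVec x) + v) ↔
      ∃ x ∈ Rk, ∃ u ∈ U, ∃ w ∈ W,
        y = Sum.elim (A.mulVec x + Bu.mulVec u + Bw.mulVec w + Baff)
          (Ex.mulVec x + Eu.mulVec u + Ew.mulVec w) := by
  constructor
  · rintro ⟨x, hx, _, ⟨u, hu, w, hw, rfl⟩, rfl⟩
    exact ⟨x, hx, u, hu, w, hw, Sum.elim_add_elim_add_elim_add_elim_zero ..⟩
  · rintro ⟨x, hx, u, hu, w, hw, rfl⟩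
    exact ⟨x, hx, _, ⟨u, hu, w, hw, rfl⟩, (Sum.elim_add_elim_add_elim_add_elim_zero ..).symm⟩

end

theorem mld_one_step_reachable_set
    {n nu nw ne : ℕ}
    (A : Matrix (Fin n) (Fin n) ℝ) (Bu : Matrix (Fin n) (Fin nu) ℝ)
    (Bw : Matrix (Fin n) (Fin nw) ℝ) (Baff : Fin n → ℝ)
    (Ex : Matrix (Fin ne) (Fin n) ℝ) (Eu : Matrix (Fin ne) (Fin nu) ℝ)
    (Ew : Matrix (Fin ne) (Fin nw) ℝ) (Eaff : Fin ne → ℝ)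
    (Rk : Set (Fin n → ℝ)) (U : Set (Fin nu → ℝ)) (W : Set (Fin nw → ℝ))
    -- V = [Bu; Eu]·U ⊕ [Bw; Ew]·W ⊕ {(Baff; 0)}
    (V : Set (Fin n ⊕ Fin ne → ℝ))
    (hV : V = {v | ∃ u ∈ U, ∃ w ∈ W,
        v = Sum.elim (Bu.mulVec u) (Eu.mulVec u)
          + Sum.elim (Bw.mulVec w) (Ew.mulVec w)
          + Sum.elim Baff 0}) :
    {x' | ∃ x ∈ Rk, ∃ u ∈ U, ∃ w ∈ W,
        (∀ i, (Ex.mulVec x + Eu.mulVec u + Ew.mulVec w) i ≤ Eaff i) ∧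
        x' = A.mulVec x + Bu.mulVec u + Bw.mulVec w + Baff} =
    (fun y : Fin n ⊕ Fin ne → ℝ => fun i : Fin n => y (Sum.inl i)) ''
      {y | (∃ x ∈ Rk, ∃ v ∈ V, y = Sum.elim (A.mulVec x) (Ex.mulVec x) + v) ∧
           (∀ j : Fin ne, y (Sum.inr j) ≤ Eaff j)} := by
  subst hV
  simp only [exists_stacked_add_mem_iff]
  ext x'
  -- `Sum.elim a b (.inl i)` and `Sum.elim a b (.inr j)` reduce to `a i` and `b j`, so the
  -- successor and the constraint vector are read off the stacked vector definitionally.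
  constructor
  · rintro ⟨x, hx, u, hu, w, hw, hle, rfl⟩
    exact ⟨_, ⟨⟨x, hx, u, hu, w, hw, rfl⟩, hle⟩, rfl⟩
  · rintro ⟨_, ⟨⟨x, hx, u, hu, w, hw, rfl⟩, hle⟩, rfl⟩
    exact ⟨x, hx, u, hu, w, hw, hle, rfl⟩
end

section
/- A constant binary factor can be substituted: let Z_h = ⟨G^c, G^b, c, A^c, A^b, b⟩ be a hybrid zonotope such that every feasible binary vector ξ^b has first coordinate equal to a fixed value s ∈ {-1, 1}. Then Z_h equals the hybrid zonotope ⟨G^c, G^b_{2:}, c + s·g^{(b,1)}, A^c, A^b_{2:}, b − s·a^{(b,1)}⟩ obtained by removing the first binary generator column g^{(b,1)} and first binary constraint column a^{(b,1)} and shifting the center and constraint vector. -/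
open Matrix

lemma Matrix.mulVec_sumElim_unit {m β R : Type*} [Fintype β] [CommSemiring R]
    (M : Matrix m (Unit ⊕ β) R) (a : R) (v : β → R) :
    M *ᵥ Sum.elim (fun _ => a) v = M.submatrix id Sum.inr *ᵥ v + a • fun r => M r (Sum.inl ()) := by
  ext r
  simp [mulVec, dotProduct, Fintype.sum_sum_type, mul_comm, add_comm]

lemma mem_hybridZonotope_removeFirstBinary_iff {n ng nb nc : Type*} [Fintype ng] [Fintype nb]
    (Gc : Matrix n ng ℝ) (Gb : Matrix n (Unit ⊕ nb) ℝ) (c : n → ℝ)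
    (Ac : Matrix nc ng ℝ) (Ab : Matrix nc (Unit ⊕ nb) ℝ) (b : nc → ℝ) (s : ℝ) (z : n → ℝ) :
    z ∈ hybridZonotope Gc (Gb.submatrix id Sum.inr) (c + s • fun r => Gb r (Sum.inl ()))
        Ac (Ab.submatrix id Sum.inr) (b - s • fun r => Ab r (Sum.inl ())) ↔
      ∃ ξc : ng → ℝ, ∃ ξb : nb → ℝ, (∀ i, |ξc i| ≤ 1) ∧ (∀ i, ξb i = 1 ∨ ξb i = -1) ∧
        Ac *ᵥ ξc + Ab *ᵥ Sum.elim (fun _ => s) ξb = b ∧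
        z = Gc *ᵥ ξc + Gb *ᵥ Sum.elim (fun _ => s) ξb + c := by
  simp only [hybridZonotope, Set.mem_ofPred_eq, mulVec_sumElim_unit]
  refine exists_congr fun ξc => exists_congr fun ξb => and_congr_right' <| and_congr_right' ?_
  rw [eq_sub_iff_add_eq, add_assoc, add_comm c]
  simp only [add_assoc]

theorem hybridZonotope_removeConstantBinaryFactor
    {n nb ng nc : ℕ}
    (Gc : Matrix (Fin n) (Fin ng) ℝ) (Gb : Matrix (Fin n) (Unit ⊕ Fin nb) ℝ) (c : Fin n → ℝ)
    (Ac : Matrix (Fin nc) (Fin ng) ℝ) (Ab : Matrix (Fin nc) (Unit ⊕ Fin nb) ℝ) (b : Fin nc → ℝ)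
    (s : ℝ) (hs : s = 1 ∨ s = -1)
    -- every feasible binary vector has its first coordinate equal to s
    (hconst : ∀ ξb : Unit ⊕ Fin nb → ℝ, (∀ i, ξb i = 1 ∨ ξb i = -1) →
      (∃ ξc : Fin ng → ℝ, (∀ i, |ξc i| ≤ 1) ∧ Ac.mulVec ξc + Ab.mulVec ξb = b) →
      ξb (Sum.inl ()) = s) :
    hybridZonotope Gc Gb c Ac Ab b =
      hybridZonotope Gc (Gb.submatrix id Sum.inr)
        (c + s • (fun r => Gb r (Sum.inl ())))
        Ac (Ab.submatrix id Sum.inr)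
        (b - s • (fun r => Ab r (Sum.inl ()))) := by
  ext z
  rw [mem_hybridZonotope_removeFirstBinary_iff]
  constructor
  · rintro ⟨ξc, ξb, hξc, hξb, hA, hz⟩
    have hfirst : ξb (Sum.inl ()) = s := hconst ξb hξb ⟨ξc, hξc, hA⟩
    have hsplit : Sum.elim (fun _ => s) (ξb ∘ Sum.inr) = ξb := by
      ext (⟨⟩ | i) <;> simp [hfirst]
    exact ⟨ξc, ξb ∘ Sum.inr, hξc, fun i => hξb _, hsplit ▸ hA, hsplit ▸ hz⟩
  · rintro ⟨ξc, ξb, hξc, hξb, hA, hz⟩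
    exact ⟨ξc, _, hξc, Sum.forall.2 ⟨fun _ => hs, hξb⟩, hA, hz⟩
end

section
/- The Minkowski sum identity for hybrid zonotopes is exact (both inclusions): with X denoting the hybrid zonotope ⟨[G_z^c G_w^c], [G_z^b G_w^b], c_z + c_w, diag(A_z^c, A_w^c), diag(A_z^b, A_w^b), (b_z; b_w)⟩, one has both Z ⊕ W ⊆ X and X ⊆ Z ⊕ W, where the second inclusion requires splitting any feasible factor vector of X into feasible factors for Z and W separately. -/
/-!
A factor vector of the hybrid zonotope with stacked generators and block-diagonal constraints is
exactly a pair of factor vectors, one for each summand: the block-diagonal constraints decouple,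
and the stacked generators map the pair to the sum of the two points.
-/

open Matrix

theorem fromBlocks_zero_mulVec_sumElim {l m n o α : Type*} [Fintype l] [Fintype m]
    [NonUnitalNonAssocSemiring α] (A : Matrix n l α) (D : Matrix o m α) (u : l → α) (v : m → α) :
    fromBlocks A 0 0 D *ᵥ Sum.elim u v = Sum.elim (A *ᵥ u) (D *ᵥ v) := by
  simp [fromBlocks_mulVec]

section BlockSum

variable {n ngz ngw nbz nbw ncz ncw : Type*}
  [Fintype ngz] [Fintype ngw] [Fintype nbz] [Fintype nbw]
  {Gzc : Matrix n ngz ℝ} {Gzb : Matrix n nbz ℝ} {cz : n → ℝ}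
  {Azc : Matrix ncz ngz ℝ} {Azb : Matrix ncz nbz ℝ} {bz : ncz → ℝ}
  {Gwc : Matrix n ngw ℝ} {Gwb : Matrix n nbw ℝ} {cw : n → ℝ}
  {Awc : Matrix ncw ngw ℝ} {Awb : Matrix ncw nbw ℝ} {bw : ncw → ℝ}

theorem add_mem_hybridZonotope_fromBlocks {z w : n → ℝ}
    (hz : z ∈ hybridZonotope Gzc Gzb cz Azc Azb bz)
    (hw : w ∈ hybridZonotope Gwc Gwb cw Awc Awb bw) :
    z + w ∈ hybridZonotope (fromCols Gzc Gwc) (fromCols Gzb Gwb) (cz + cw)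
      (fromBlocks Azc 0 0 Awc) (fromBlocks Azb 0 0 Awb) (Sum.elim bz bw) := by
  obtain ⟨ξcz, ξbz, hcz, hbz, hAz, rfl⟩ := hz
  obtain ⟨ξcw, ξbw, hcw, hbw, hAw, rfl⟩ := hw
  refine ⟨Sum.elim ξcz ξcw, Sum.elim ξbz ξbw, Sum.forall.2 ⟨hcz, hcw⟩,
    Sum.forall.2 ⟨hbz, hbw⟩, ?_, ?_⟩
  · rw [fromBlocks_zero_mulVec_sumElim, fromBlocks_zero_mulVec_sumElim, ← Sum.elim_add_add,
      hAz, hAw]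
  · rw [fromCols_mulVec_sumElim, fromCols_mulVec_sumElim]
    abel

theorem exists_add_eq_of_mem_hybridZonotope_fromBlocks {x : n → ℝ}
    (hx : x ∈ hybridZonotope (fromCols Gzc Gwc) (fromCols Gzb Gwb) (cz + cw)
      (fromBlocks Azc 0 0 Awc) (fromBlocks Azb 0 0 Awb) (Sum.elim bz bw)) :
    ∃ z ∈ hybridZonotope Gzc Gzb cz Azc Azb bz,
      ∃ w ∈ hybridZonotope Gwc Gwb cw Awc Awb bw, x = z + w := by
  obtain ⟨ξc, ξb, hc, hb, hA, rfl⟩ := hx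
  obtain ⟨ξcz, ξcw, rfl⟩ : ∃ u v, ξc = Sum.elim u v := ⟨_, _, (Sum.elim_comp_inl_inr ξc).symm⟩
  obtain ⟨ξbz, ξbw, rfl⟩ : ∃ u v, ξb = Sum.elim u v := ⟨_, _, (Sum.elim_comp_inl_inr ξb).symm⟩
  rw [fromBlocks_zero_mulVec_sumElim, fromBlocks_zero_mulVec_sumElim, ← Sum.elim_add_add,
    Sum.elim_eq_iff] at hA
  refine ⟨_, ⟨ξcz, ξbz, fun i => hc (.inl i), fun i => hb (.inl i), hA.1, rfl⟩,
    _, ⟨ξcw, ξbw, fun i => hc (.inr i), fun i => hb (.inr i), hA.2, rfl⟩, ?_⟩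
  rw [fromCols_mulVec_sumElim, fromCols_mulVec_sumElim]
  abel

end BlockSum

theorem hybridZonotope_minkowskiSum_both_inclusions
    {n ngz ngw nbz nbw ncz ncw : ℕ}
    (Gzc : Matrix (Fin n) (Fin ngz) ℝ) (Gzb : Matrix (Fin n) (Fin nbz) ℝ) (cz : Fin n → ℝ)
    (Azc : Matrix (Fin ncz) (Fin ngz) ℝ) (Azb : Matrix (Fin ncz) (Fin nbz) ℝ) (bz : Fin ncz → ℝ)
    (Gwc : Matrix (Fin n) (Fin ngw) ℝ) (Gwb : Matrix (Fin n) (Fin nbw) ℝ) (cw : Fin n → ℝ)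
    (Awc : Matrix (Fin ncw) (Fin ngw) ℝ) (Awb : Matrix (Fin ncw) (Fin nbw) ℝ) (bw : Fin ncw → ℝ) :
    {x | ∃ z ∈ hybridZonotope Gzc Gzb cz Azc Azb bz,
         ∃ w ∈ hybridZonotope Gwc Gwb cw Awc Awb bw, x = z + w} ⊆
      hybridZonotope (Matrix.fromCols Gzc Gwc) (Matrix.fromCols Gzb Gwb) (cz + cw)
        (Matrix.fromBlocks Azc 0 0 Awc) (Matrix.fromBlocks Azb 0 0 Awb) (Sum.elim bz bw) ∧
    hybridZonotope (Matrix.fromCols Gzc Gwc) (Matrix.fromCols Gzb Gwb) (cz + cw)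
        (Matrix.fromBlocks Azc 0 0 Awc) (Matrix.fromBlocks Azb 0 0 Awb) (Sum.elim bz bw) ⊆
      {x | ∃ z ∈ hybridZonotope Gzc Gzb cz Azc Azb bz,
           ∃ w ∈ hybridZonotope Gwc Gwb cw Awc Awb bw, x = z + w} := by
  exact ⟨fun _ ⟨_, hz, _, hw, hx⟩ => hx ▸ add_mem_hybridZonotope_fromBlocks hz hw,
    fun _ => exists_add_eq_of_mem_hybridZonotope_fromBlocks⟩
end
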